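/- Let $\pi$ be an overpartition in $\overline{\mathcal{B}}(\alpha_1,\ldots,\alpha_\lambda;\eta,k,r)$, and for some $t \geq 1$ let $\{\pi_{c+l}\}_{0 \leq l \leq k-2}$ and $\{\pi_{d+l}\}_{0 \leq l \leq k-2}$ be any two $(k-1)$-bands of $\pi$ belonging to $[(t-1)\eta, (t+1)\eta]$ (not necessarily overlapping). Then the two bands have the same parity with respect to the congruence $[|\pi_i|/\eta] + \cdots + [|\pi_{i+k-2}|/\eta] \equiv r - 1 + \overline{V}_\pi(\pi_i) + \overline{O}_\pi(\pi_{i+k-2}) \pmod{2}$. -/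

import Mathlib

/-- A part of an overpartition: a size together with a flag telling
whether the part is overlined. -/
structure OPart where
  size : ℕ
  isOver : Bool
deriving DecidableEq

/-- The value of a part in the ordering `1̄ < 1 < 2̄ < 2 < ⋯`:
an overlined part of size `t` has value `2t - 1`, a non-overlined one `2t`. -/
def OPart.val (p : OPart) : ℕ := 2 * p.size - (if p.isOver then 1 else 0)

def dpart : OPart := ⟨0, false⟩

/-- value of the `i`-th part (0-based). -/
def pval (π : List OPart) (i : ℕ) : ℕ := (π.getD i dpart).val

def pover (π : List OPart) (i : ℕ) : Bool := (π.getD i dpart).isOver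

def psize (π : List OPart) (i : ℕ) : ℕ := (π.getD i dpart).size

/-- the weight `|π|`: the sum of the sizes of the parts. -/
def wt (π : List OPart) : ℕ := (π.map OPart.size).sum

/-- An overpartition: a sequence of positive parts, non-increasing in the
ordering `1̄ < 1 < 2̄ < 2 < ⋯`, in which each size is overlined at most once
(the overlined copy, being smallest among equal sizes, is the last occurrence). -/
def IsOverPartition (π : List OPart) : Prop :=
  List.Pairwise (fun p q : OPart => q.val ≤ p.val) π ∧
  (∀ p ∈ π, 0 < p.size) ∧
  (∀ t : ℕ, π.count (⟨t, true⟩ : OPart) ≤ 1)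

/-- `{π_{i+l}}_{0 ≤ l ≤ m-1}` is an `m`-band of `π`:
`π_i ≤ π_{i+m-1} + η`, with strict inequality if `π_i` is overlined. -/
def IsBand (η : ℕ) (π : List OPart) (m i : ℕ) : Prop :=
  i + m ≤ π.length ∧
  pval π i ≤ pval π (i + m - 1) + 2 * η ∧
  (pover π i = true → pval π i < pval π (i + m - 1) + 2 * η)

/-- `V̄_π(N)`: the number of overlined parts of value at most `N`
whose size is not divisible by `η`. -/
def Vbar (η : ℕ) (π : List OPart) (N : ℕ) : ℕ :=
  π.countP (fun p => p.isOver && decide (p.val ≤ N) && !(decide (p.size % η = 0)))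

/-- `Ō_π(N)`: the number of overlined parts of value at least `N`
whose size is divisible by `η`. -/
def Obar (η : ℕ) (π : List OPart) (N : ℕ) : ℕ :=
  π.countP (fun p => p.isOver && decide (N ≤ p.val) && decide (p.size % η = 0))

/-- `f_{≤η}(π)`: the number of parts not exceeding `η`. -/
def fLe (η : ℕ) (π : List OPart) : ℕ :=
  π.countP (fun p => decide (p.val ≤ 2 * η))

/-- `[|π_i|/η] + ⋯ + [|π_{i+m-1}|/η]`. -/
def bandSum (η : ℕ) (π : List OPart) (i m : ℕ) : ℕ :=
  ∑ l ∈ Finset.range m, psize π (i + l) / η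

/-- Every part is congruent to `0, α_1, …, α_λ` modulo `η`. -/
def CongParts (α : ℕ → ℕ) (lam η : ℕ) (π : List OPart) : Prop :=
  ∀ p ∈ π, p.size % η = 0 ∨ ∃ s, 1 ≤ s ∧ s ≤ lam ∧ p.size % η = α s

/-- The class `B̄(α_1,…,α_λ; η, k, r)`: conditions (1)–(4) of the definition
of `B̄₀`. -/
def InBbar (α : ℕ → ℕ) (lam η k r : ℕ) (π : List OPart) : Prop :=
  IsOverPartition π ∧
  CongParts α lam η π ∧
  (∀ p ∈ π, p.isOver = false → η ∣ p.size) ∧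
  (∀ i, i + k ≤ π.length →
    pval π (i + k - 1) + 2 * η ≤ pval π i ∧
    (pover π i = false → pval π (i + k - 1) + 2 * η < pval π i)) ∧
  fLe η π ≤ r

/-- An `m`-band at `i` is even:
`[|π_i|/η]+⋯+[|π_{i+m-1}|/η] ≡ r - 1 + V̄_π(π_i) + Ō_π(π_{i+m-1}) (mod 2)`. -/
def EvenBand (η r : ℕ) (π : List OPart) (m i : ℕ) : Prop :=
  Int.ModEq 2 (bandSum η π i m)
    ((r : ℤ) - 1 + (Vbar η π (pval π i) : ℤ) + (Obar η π (pval π (i + m - 1)) : ℤ))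

/-- Condition (5) of the definition of `B̄₀`. -/
def Cond5 (η k r : ℕ) (π : List OPart) : Prop :=
  fLe η π = r → (⟨η, true⟩ : OPart) ∉ π →
    ∃ i, IsBand η π (k - 1) i ∧ pval π i < 2 * (2 * η) - 1

/-- The class `B̄₀(α_1,…,α_λ; η, k, r)`: conditions (1)–(6). -/
def InB0 (α : ℕ → ℕ) (lam η k r : ℕ) (π : List OPart) : Prop :=
  InBbar α lam η k r π ∧ Cond5 η k r π ∧
  ∀ i, IsBand η π (k - 1) i → EvenBand η r π (k - 1) i

/-- `s(π) > t̄η`: every overlined part divisible by `η` has size `> tη`. -/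
def SGt (η t : ℕ) (π : List OPart) : Prop :=
  ∀ p ∈ π, p.isOver = true → η ∣ p.size → t * η < p.size

/-- `s(π) = t̄η`. -/
def SEq (η t : ℕ) (π : List OPart) : Prop :=
  (⟨t * η, true⟩ : OPart) ∈ π ∧
  ∀ p ∈ π, p.isOver = true → η ∣ p.size → t * η ≤ p.size

/-- `g(π) ≥ x` (value `x`): every part starting a `(k-1)`-band has value `≥ x`. -/
def GGe (η k : ℕ) (π : List OPart) (x : ℕ) : Prop :=
  ∀ i, IsBand η π (k - 1) i → x ≤ pval π i

/-- `g(π) < x`: some part starting a `(k-1)`-band has value `< x`. -/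
def GLt (η k : ℕ) (π : List OPart) (x : ℕ) : Prop :=
  ∃ i, IsBand η π (k - 1) i ∧ pval π i < x

/-- `π ∈ B̄₀^=(α_1,…,α_λ; η,k,r | t)`. -/
def InBeq (α : ℕ → ℕ) (lam η k r t : ℕ) (π : List OPart) : Prop :=
  InB0 α lam η k r π ∧
  ((SEq η t π ∧ GGe η k π (2 * (t * η) - 1)) ∨
   (SGt η t π ∧ GGe η k π (2 * (t * η)) ∧ GLt η k π (2 * ((t + 1) * η) - 1)))

/-- `π ∈ B̄₀^>(α_1,…,α_λ; η,k,r | t)`. -/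
def InBgt (α : ℕ → ℕ) (lam η k r t : ℕ) (π : List OPart) : Prop :=
  InB0 α lam η k r π ∧ SGt η t π ∧ GGe η k π (2 * ((t + 1) * η) - 1)

/-- An `m`-band belonging to the closed interval `[(t-1)η, (t+1)η]`. -/
def BandInC (η t : ℕ) (π : List OPart) (m i : ℕ) : Prop :=
  IsBand η π m i ∧ 2 * ((t - 1) * η) ≤ pval π (i + m - 1) ∧
  pval π i ≤ 2 * ((t + 1) * η)

/-- An `m`-band belonging to `[(t-1)η, \overline{(t+1)η})`. -/
def BandInO (η t : ℕ) (π : List OPart) (m i : ℕ) : Prop :=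
  IsBand η π m i ∧ 2 * ((t - 1) * η) ≤ pval π (i + m - 1) ∧
  pval π i < 2 * ((t + 1) * η) - 1

/-- An `m`-band at `i` is of type N. -/
def TypeN (η r t : ℕ) (π : List OPart) (m i : ℕ) : Prop :=
  Int.ModEq 2 (bandSum η π i m)
    ((t : ℤ) + (r : ℤ) - 1 + (Vbar η π (pval π i) : ℤ) +
      (Obar η π (pval π (i + m - 1)) : ℤ))

/-- `π` is obtained from `μ` by inserting the part `p`. -/
def InsertPart (μ : List OPart) (p : OPart) (π : List OPart) : Prop :=
  ∃ l1 l2, μ = l1 ++ l2 ∧ π = l1 ++ p :: l2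

/-- The `(k-1)`-reduction `D_t` as a relation: `μ = D_t(π)`. -/
def DtRel (η t : ℕ) (π μ : List OPart) : Prop :=
  ((⟨t * η, true⟩ : OPart) ∈ π ∧ InsertPart μ ⟨t * η, true⟩ π) ∨
  ((⟨t * η, true⟩ : OPart) ∉ π ∧ InsertPart μ ⟨t * η, false⟩ π)

/-- `μ` has a `(k-2)`-band belonging to `[(t-1)η, \overline{(t+1)η})` of type N. -/
def HasTypeNBand (η r k t : ℕ) (μ : List OPart) : Prop :=
  ∃ i, BandInO η t μ (k - 2) i ∧ TypeN η r t μ (k - 2) i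

/-- The `(k-1)`-augmentation `C_t` as a relation: `π = C_t(μ)`. -/
def CtRel (η r k t : ℕ) (μ π : List OPart) : Prop :=
  (HasTypeNBand η r k t μ ∧ InsertPart μ ⟨t * η, false⟩ π) ∨
  (¬ HasTypeNBand η r k t μ ∧ InsertPart μ ⟨t * η, true⟩ π)

/-- `B₁`-type overpartitions: conditions (1)–(4), no overlined part divisible
by `η`, and at most `r - 1` parts not exceeding `η`. -/
def InB1over (α : ℕ → ℕ) (lam η k r : ℕ) (π : List OPart) : Prop :=
  InBbar α lam η k r π ∧ (∀ p ∈ π, p.isOver = true → ¬ η ∣ p.size) ∧ fLe η π < r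

/-- `D_η`: partitions into distinct parts divisible by `η`. -/
def InD (η : ℕ) (τ : List ℕ) : Prop :=
  List.Pairwise (· > ·) τ ∧ ∀ x ∈ τ, 0 < x ∧ η ∣ x

/-- Bressoud's class `B₁(α_1,…,α_λ; η,k,r)` of ordinary partitions. -/
def InB1nat (α : ℕ → ℕ) (lam η k r : ℕ) (σ : List ℕ) : Prop :=
  List.Pairwise (· ≥ ·) σ ∧ (∀ x ∈ σ, 0 < x) ∧
  (∀ x ∈ σ, x % η = 0 ∨ ∃ s, 1 ≤ s ∧ s ≤ lam ∧ x % η = α s) ∧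
  (∀ x : ℕ, ¬ η ∣ x → σ.count x ≤ 1) ∧
  (∀ i, i + k ≤ σ.length →
    σ.getD (i + k - 1) 0 + η ≤ σ.getD i 0 ∧
    (η ∣ σ.getD i 0 → σ.getD (i + k - 1) 0 + η < σ.getD i 0)) ∧
  σ.countP (fun x => decide (x ≤ η)) < r

/-- The class `Ā₀(α_1,…,α_λ; η,k,r)`. Congruence conditions involving `η/2`
are stated with sizes doubled. -/
def InA0 (α : ℕ → ℕ) (lam η k r : ℕ) (π : List OPart) : Prop :=
  IsOverPartition π ∧
  CongParts α lam η π ∧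
  (Even lam →
    ∀ p ∈ π, p.isOver = false →
      η ∣ p.size ∧
      ¬ (2 * η * (2 * k - lam - 1) ∣ 2 * p.size) ∧
      2 * p.size % (2 * η * (2 * k - lam - 1)) ≠ η * (2 * r - lam) ∧
      2 * p.size % (2 * η * (2 * k - lam - 1)) ≠
        2 * η * (2 * k - lam - 1) - η * (2 * r - lam)) ∧
  (¬ Even lam →
    (∀ p ∈ π, p.isOver = false →
      η ∣ 2 * p.size ∧
      p.size % (2 * η) ≠ η ∧
      ¬ (2 * η * (2 * k - lam - 1) ∣ 2 * p.size) ∧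
      2 * p.size % (2 * η * (2 * k - lam - 1)) ≠ η * (2 * r - lam) ∧
      2 * p.size % (2 * η * (2 * k - lam - 1)) ≠
        2 * η * (2 * k - lam - 1) - η * (2 * r - lam)) ∧
    (∀ p ∈ π, p.isOver = true → 2 * p.size % (2 * η) ≠ η))

/-!
Assume `c ≤ d`. Sliding the window from `c` to `d` removes the parts `π_c, …, π_{d-1}` from the
band sum and adds `π_{c+k-1}, …, π_{d+k-2}`. Since overlined parts have pairwise distinct values,
`V̄_π(π_i)` counts the overlined non-multiples of `η` at indices `≥ i` and `Ō_π(π_i)` the overlined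
multiples at indices `≤ i`; so `V̄` loses exactly the overlined non-multiples among the removed
parts and `Ō` gains exactly the overlined multiples among the added ones. It therefore suffices
that for each `j ∈ [c, d)` the parts `a = π_j`, `b = π_{j+k-1}` satisfy
`⌊a/η⌋ + ⌊b/η⌋ + [a overlined, η ∤ a] + [b overlined, η ∣ b] ≡ 0 (mod 2)`.
The difference condition `a ≥ b + η` and the window `[(t-1)η, (t+1)η]` force
`tη < a ≤ (t+1)η` and `(t-1)η ≤ b ≤ tη`, so the `a`-terms add up to `⌈a/η⌉ = t + 1` while the
`b`-terms add up to `t - 1` or `t + 1`.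
-/

lemma Nat.div_add_ite_eq_of_mul_lt_of_le {a u η : ℕ} (hη : 0 < η) (h₁ : u * η < a)
    (h₂ : a ≤ (u + 1) * η) : a / η + (if a % η = 0 then 0 else 1) = u + 1 := by
  split_ifs with hmod
  · have hlo : u < a / η :=
      (Nat.lt_div_iff_mul_lt' (Nat.dvd_of_mod_eq_zero hmod) u).2 (mul_comm u η ▸ h₁)
    have hhi : a / η ≤ u + 1 := Nat.div_le_of_le_mul (mul_comm (u + 1) η ▸ h₂)
    omega
  · have hne : a ≠ (u + 1) * η := fun h => hmod (h ▸ Nat.mul_mod_left _ _)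
    have hlo : u ≤ a / η := (Nat.le_div_iff_mul_le hη).2 h₁.le
    have hhi : a / η < u + 1 := (Nat.div_lt_iff_lt_mul hη).2 (lt_of_le_of_ne h₂ hne)
    omega

lemma List.getD_mem {α : Type*} {l : List α} {j : ℕ} (d : α) (hj : j < l.length) :
    l.getD j d ∈ l := by
  rw [List.getD_eq_getElem l d hj]
  exact List.getElem_mem _

lemma List.countP_eq_sum_range_getD {α : Type*} (l : List α) (p : α → Bool) (d : α) :
    l.countP p = ∑ j ∈ Finset.range l.length, if p (l.getD j d) then 1 else 0 := by
  induction l with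
  | nil => simp
  | cons a l ih =>
    rw [List.countP_cons, List.length_cons, Finset.sum_range_succ', ih]
    simp

lemma OPart.eq_of_val_eq {p q : OPart} (hp : 0 < p.size) (hq : 0 < q.size)
    (h : p.val = q.val) : p = q := by
  obtain ⟨a, oa⟩ := p
  obtain ⟨b, ob⟩ := q
  cases oa <;> cases ob <;> simp [OPart.val] at h hp hq ⊢ <;> omega

lemma OPart.even_div_add_div_of_gap {η u : ℕ} (hη : 0 < η) {p q : OPart} (hq : 0 < q.size)
    (hpd : p.isOver = false → η ∣ p.size)
    (hlow : 2 * (u * η) ≤ q.val) (hhigh : p.val ≤ 2 * ((u + 2) * η))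
    (hgap : q.val + 2 * η ≤ p.val) (hgap' : p.isOver = false → q.val + 2 * η < p.val) :
    Even (p.size / η + q.size / η + (if p.isOver ∧ p.size % η ≠ 0 then 1 else 0) +
      (if q.isOver ∧ q.size % η = 0 then 1 else 0)) := by
  obtain ⟨a, oa⟩ := p
  obtain ⟨b, ob⟩ := q
  have e₁ : (u + 1) * η = u * η + η := by ring
  have e₂ : (u + 1 + 1) * η = u * η + 2 * η := by ring
  rw [show u + 2 = u + 1 + 1 from rfl, e₂] at hhigh
  simp only [OPart.val] at hq hpd hlow hhigh hgap hgap'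
  have ha : a / η + (if a % η = 0 then 0 else 1) = u + 1 + 1 := by
    refine Nat.div_add_ite_eq_of_mul_lt_of_le hη ?_ ?_
    · rw [e₁]; cases oa <;> cases ob <;> simp at hlow hgap hgap' <;> omega
    · rw [e₂]; cases oa <;> simp at hhigh <;> omega
  rw [Nat.even_iff]
  cases ob
  · have hb : b / η = u := by
      refine Nat.div_eq_of_lt_le (by simpa using hlow) ?_
      rw [e₁]
      cases oa <;> simp at hhigh hgap hgap' <;> omega
    cases oa
    · simp [Nat.mod_eq_zero_of_dvd (hpd rfl)] at ha ⊢
      omega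
    · simp only [Bool.false_eq_true, false_and, if_false, true_and] at ha ⊢
      split_ifs at ha ⊢ <;> omega
  · have hb : b / η + (if b % η = 0 then 0 else 1) = u + 1 := by
      refine Nat.div_add_ite_eq_of_mul_lt_of_le hη ?_ ?_
      · simp at hlow; omega
      · rw [e₁]; cases oa <;> simp at hhigh hgap <;> omega
    cases oa
    · simp only [Nat.mod_eq_zero_of_dvd (hpd rfl), if_true] at ha ⊢
      simp only [Bool.false_eq_true, false_and, if_false, true_and] at hb ⊢
      split_ifs at hb ⊢ <;> omega
    · simp only [true_and] at ha hb ⊢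
      split_ifs at ha hb ⊢ <;> omega

namespace IsOverPartition

variable {π : List OPart} (h : IsOverPartition π)
include h

lemma pairwise_ne_of_isOver : π.Pairwise (fun p q => p.isOver → p ≠ q) := by
  have hnodup : (π.filter (·.isOver)).Nodup := by
    refine List.nodup_iff_count_le_one.2 fun p => ?_
    cases hp : p.isOver
    · rw [List.count_eq_zero.2 (by simp [hp])]
      exact zero_le_one
    · rw [List.count_filter hp]
      obtain ⟨s, o⟩ := p
      cases hp
      exact h.2.2 s
  exact (List.pairwise_filter.1 hnodup).imp fun {p q} hne hp (hpq : p = q) =>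
    hne hp (hpq ▸ hp) hpq

lemma pairwise_val_lt : π.Pairwise (fun p q => (p.isOver ∨ q.isOver) → q.val < p.val) := by
  refine (h.1.and h.pairwise_ne_of_isOver).imp_of_mem fun hp hq ⟨hle, hne⟩ ho => ?_
  refine lt_of_le_of_ne hle fun heq => ?_
  have hpq := OPart.eq_of_val_eq (h.2.1 _ hp) (h.2.1 _ hq) heq.symm
  exact hne (by subst hpq; simpa using ho) hpq

lemma pval_antitone : Antitone (pval π) := by
  intro i j hij
  rcases hij.eq_or_lt with rfl | hlt
  · exact le_rfl
  by_cases hj : j < π.length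
  · simp only [pval, List.getD_eq_getElem π dpart hj,
      List.getD_eq_getElem π dpart (hlt.trans hj)]
    exact List.pairwise_iff_getElem.1 h.1 i j _ hj hlt
  · rw [pval, List.getD_eq_default π dpart (not_lt.1 hj)]
    simp [dpart, OPart.val]

lemma pval_lt_pval {i j : ℕ} (hij : i < j) (hj : j < π.length) (ho : pover π i ∨ pover π j) :
    pval π j < pval π i := by
  have hi : i < π.length := hij.trans hj
  simp only [pval, pover, List.getD_eq_getElem π dpart hj,
    List.getD_eq_getElem π dpart hi] at ho ⊢
  exact List.pairwise_iff_getElem.1 h.pairwise_val_lt i j hi hj hij ho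

lemma pval_le_pval_iff {i j : ℕ} (hi : i < π.length) (ho : pover π i ∨ pover π j) :
    pval π j ≤ pval π i ↔ i ≤ j :=
  ⟨fun hle => not_lt.1 fun hji => (h.pval_lt_pval hji hi ho.symm).not_ge hle,
    fun hij => h.pval_antitone hij⟩

end IsOverPartition

section Counting

variable {π : List OPart} (η : ℕ)

lemma Vbar_pval_eq (h : IsOverPartition π) {c : ℕ} (hc : c < π.length) :
    Vbar η π (pval π c) =
      ∑ j ∈ Finset.Ico c π.length, if pover π j ∧ psize π j % η ≠ 0 then 1 else 0 := by
  rw [Vbar, List.countP_eq_sum_range_getD _ _ dpart, Finset.range_eq_Ico,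
    ← Finset.sum_Ico_consecutive _ (Nat.zero_le c) hc.le, Finset.sum_eq_zero, zero_add]
  · refine Finset.sum_congr rfl fun j hj => ?_
    show (if (pover π j && decide (pval π j ≤ pval π c) && !decide (psize π j % η = 0))
      then 1 else 0) = _
    simp [h.pval_antitone (Finset.mem_Ico.1 hj).1]
  · intro j hj
    have hjc : j < c := (Finset.mem_Ico.1 hj).2
    have hcount : ¬ (pover π j ∧ pval π j ≤ pval π c) := fun ⟨ho, hle⟩ =>
      (h.pval_le_pval_iff hc (.inr ho)).1 hle |>.not_gt hjc
    show (if (pover π j && decide (pval π j ≤ pval π c) && !decide (psize π j % η = 0))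
      then 1 else 0) = 0
    simp only [Bool.and_eq_true, decide_eq_true_eq] at hcount ⊢
    simp [hcount]

lemma Obar_pval_eq (h : IsOverPartition π) {c : ℕ} (hc : c < π.length) :
    Obar η π (pval π c) =
      ∑ j ∈ Finset.range (c + 1), if pover π j ∧ psize π j % η = 0 then 1 else 0 := by
  rw [Obar, List.countP_eq_sum_range_getD _ _ dpart,
    ← Finset.sum_range_add_sum_Ico _ (Nat.succ_le_of_lt hc),
    Finset.sum_eq_zero (s := Finset.Ico _ _), add_zero]
  · refine Finset.sum_congr rfl fun j hj => ?_
    show (if (pover π j && decide (pval π c ≤ pval π j) && decide (psize π j % η = 0))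
      then 1 else 0) = _
    simp [h.pval_antitone (Nat.lt_succ_iff.1 (Finset.mem_range.1 hj))]
  · intro j hj
    have hcj : c < j := (Finset.mem_Ico.1 hj).1
    have hcount : ¬ (pover π j ∧ pval π c ≤ pval π j) := fun ⟨ho, hle⟩ =>
      (h.pval_le_pval_iff (Finset.mem_Ico.1 hj).2 (.inl ho)).1 hle |>.not_gt hcj
    show (if (pover π j && decide (pval π c ≤ pval π j) && decide (psize π j % η = 0))
      then 1 else 0) = 0
    simp only [Bool.and_eq_true, decide_eq_true_eq] at hcount ⊢
    simp [hcount]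

lemma bandSum_eq_sum_Ico (π : List OPart) (i m : ℕ) :
    bandSum η π i m = ∑ j ∈ Finset.Ico i (i + m), psize π j / η := by
  rw [Finset.sum_Ico_eq_sum_range, Nat.add_sub_cancel_left, bandSum]

end Counting

/-- The `m`-band at `i` is even iff this is `≡ r - 1 (mod 2)`. -/
def bandCharge (η : ℕ) (π : List OPart) (m i : ℕ) : ℕ :=
  bandSum η π i m + Vbar η π (pval π i) + Obar η π (pval π (i + m - 1))

theorem bandCharge_mod_two_eq {η m u c d : ℕ} {π : List OPart} (hη : 0 < η)
    (h : IsOverPartition π) (hdvd : ∀ p ∈ π, p.isOver = false → η ∣ p.size)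
    (hgap : ∀ j, j + m < π.length → pval π (j + m) + 2 * η ≤ pval π j ∧
      (pover π j = false → pval π (j + m) + 2 * η < pval π j))
    (hm : 0 < m) (hcd : c ≤ d) (hd : d + m ≤ π.length)
    (hlow : 2 * (u * η) ≤ pval π (d + m - 1)) (hhigh : pval π c ≤ 2 * ((u + 2) * η)) :
    bandCharge η π m c % 2 = bandCharge η π m d % 2 := by
  have hsum : bandSum η π c m + ∑ j ∈ Finset.Ico (c + m) (d + m), psize π j / η =
      ∑ j ∈ Finset.Ico c d, psize π j / η + bandSum η π d m := by
    rw [bandSum_eq_sum_Ico, bandSum_eq_sum_Ico, Finset.sum_Ico_consecutive _ (by omega) (by omega),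
      Finset.sum_Ico_consecutive _ hcd (by omega)]
  have hV : Vbar η π (pval π c) = ∑ j ∈ Finset.Ico c d,
      (if pover π j ∧ psize π j % η ≠ 0 then 1 else 0) + Vbar η π (pval π d) := by
    rw [Vbar_pval_eq η h (by omega), Vbar_pval_eq η h (by omega),
      Finset.sum_Ico_consecutive _ hcd (by omega)]
  have hO : Obar η π (pval π (d + m - 1)) = Obar η π (pval π (c + m - 1)) +
      ∑ j ∈ Finset.Ico (c + m) (d + m), if pover π j ∧ psize π j % η = 0 then 1 else 0 := by
    rw [Obar_pval_eq η h (by omega), Obar_pval_eq η h (by omega), Nat.sub_add_cancel (by omega),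
      Nat.sub_add_cancel (by omega), Finset.sum_range_add_sum_Ico _ (by omega)]
  have hpairs : Even (∑ j ∈ Finset.Ico c d, (psize π j / η + psize π (j + m) / η +
      (if pover π j ∧ psize π j % η ≠ 0 then 1 else 0) +
      (if pover π (j + m) ∧ psize π (j + m) % η = 0 then 1 else 0))) := by
    refine Finset.even_sum _ fun j hj => ?_
    obtain ⟨hcj, hjd⟩ := Finset.mem_Ico.1 hj
    have hjm : j + m < π.length := by omega
    exact OPart.even_div_add_div_of_gap hη (h.2.1 _ (List.getD_mem _ hjm))
      (hdvd _ (List.getD_mem _ (by omega)))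
      (hlow.trans (h.pval_antitone (by omega))) ((h.pval_antitone hcj).trans hhigh)
      (hgap j hjm).1 (hgap j hjm).2
  simp only [Finset.sum_add_distrib] at hpairs
  rw [Finset.sum_Ico_add' (fun j => psize π j / η),
    Finset.sum_Ico_add' (fun j => if pover π j ∧ psize π j % η = 0 then 1 else 0),
    Nat.even_iff] at hpairs
  unfold bandCharge
  omega

theorem stmt_5_general (α : ℕ → ℕ) (lam η k r : ℕ)
    (hη : 0 < η)
    (hlk : lam + 1 < k)
    (π : List OPart) (hπ : InBbar α lam η k r π)
    (t : ℕ) (c d : ℕ)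
    (hc : BandInC η t π (k - 1) c) (hd : BandInC η t π (k - 1) d) :
    EvenBand η r π (k - 1) c ↔ EvenBand η r π (k - 1) d := by
  obtain ⟨hop, -, hdvd, hgap, -⟩ := hπ
  have hgap' : ∀ j, j + (k - 1) < π.length → pval π (j + (k - 1)) + 2 * η ≤ pval π j ∧
      (pover π j = false → pval π (j + (k - 1)) + 2 * η < pval π j) := fun j hj => by
    rw [← Nat.add_sub_assoc (by omega)]
    exact hgap j (by omega)
  have hwindow : 2 * ((t + 1) * η) ≤ 2 * ((t - 1 + 2) * η) :=
    Nat.mul_le_mul_left 2 (Nat.mul_le_mul_right η (by omega))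
  have key : ∀ {c d}, c ≤ d → BandInC η t π (k - 1) c → BandInC η t π (k - 1) d →
      bandCharge η π (k - 1) c % 2 = bandCharge η π (k - 1) d % 2 := fun hcd hc hd =>
    bandCharge_mod_two_eq hη hop hdvd hgap' (by omega) hcd hd.1.1 hd.2.1 (hc.2.2.trans hwindow)
  have hcharge := (le_total c d).elim (fun h => key h hc hd) (fun h => (key h hd hc).symm)
  unfold bandCharge at hcharge
  unfold EvenBand Int.ModEq
  omega

theorem stmt_5 (α : ℕ → ℕ) (lam η k r : ℕ)
    (hη : 0 < η)
    (hαpos : ∀ i, 1 ≤ i → i ≤ lam → 0 < α i ∧ α i < η)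
    (hαmono : ∀ i j, 1 ≤ i → i < j → j ≤ lam → α i < α j)
    (hαsym : ∀ i, 1 ≤ i → i ≤ lam → α i = η - α (lam + 1 - i))
    (hrk : r < k) (hlr : lam ≤ r) (hlk : lam + 1 < k)
    (π : List OPart) (hπ : InBbar α lam η k r π)
    (t : ℕ) (ht : 1 ≤ t) (c d : ℕ)
    (hc : BandInC η t π (k - 1) c) (hd : BandInC η t π (k - 1) d) :
    EvenBand η r π (k - 1) c ↔ EvenBand η r π (k - 1) d :=
  stmt_5_general α lam η k r hη hlk π hπ t c d hc hd
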